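/- Let α ≥ π/2 and let x ∈ 𝒳 be a slowly oscillating periodic solution of Wright's equation x'(t) = -α(e^{x(t-1)} - 1), with q = q(x) and q̄ = q̄(x). Define a_1(α) = -(α - 1) and a_{i+1}(α) = α(e^{a_i(α)} - 1). Then for every i ≥ 1: 1 + (1/α)·(α + e^{-α} - 1)/(exp(α + e^{-α} - 1) - 1) < q < 2 + 1/α, and 1 + 1/α < q̄ < max{3, 2 + |(e^α - 1)/(e^{a_i(α)} - 1)|}. Additionally, if α ≥ 2 then q < 2. -/

import Mathlib

open Real Set Filter

noncomputable section

/-- `x` solves Wright's equation `x'(t) = -α (e^{x(t-1)} - 1)` on all of `ℝ`. -/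
def WrightSol (α : ℝ) (x : ℝ → ℝ) : Prop :=
  ∀ t : ℝ, HasDerivAt x (-α * (Real.exp (x (t - 1)) - 1)) t

/-- The space 𝒳: C¹ functions with `x 0 = 0`, `x' 0 > 0` and `x < 0` on `(-1,0)`. -/
def InX (x : ℝ → ℝ) : Prop :=
  ContDiff ℝ 1 x ∧ x 0 = 0 ∧ 0 < deriv x 0 ∧ ∀ t ∈ Set.Ioo (-1 : ℝ) 0, x t < 0

/-- A slowly oscillating periodic solution in 𝒳, with first zero `q` and data `qbar`:
positive on `(0,q)`, negative on `(q, q+qbar)`, periodic with minimal period `q+qbar`. -/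
def SOPSX (α q qbar : ℝ) (x : ℝ → ℝ) : Prop :=
  InX x ∧ WrightSol α x ∧ 1 < q ∧ 1 < qbar ∧
  (∀ t ∈ Set.Ioo 0 q, 0 < x t) ∧
  (∀ t ∈ Set.Ioo q (q + qbar), x t < 0) ∧
  Function.Periodic x (q + qbar) ∧
  (∀ T : ℝ, 0 < T → Function.Periodic x T → q + qbar ≤ T)

/-- A slowly oscillating periodic solution (up to time translation). -/
def SOPS (α : ℝ) (x : ℝ → ℝ) : Prop :=
  WrightSol α x ∧
  ∃ q qbar : ℝ, 1 < q ∧ 1 < qbar ∧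
    (∃ τ : ℝ, (∀ t ∈ Set.Ioo 0 q, 0 < x (t + τ)) ∧
      (∀ t ∈ Set.Ioo q (q + qbar), x (t + τ) < 0)) ∧
    Function.Periodic x (q + qbar) ∧
    (∀ T : ℝ, 0 < T → Function.Periodic x T → q + qbar ≤ T)

/-- Jones' iterative lower-bound constants: `aJones α i` corresponds to `a_{i+1}` in the
paper, so `aJones α 0 = a_1 = -(α - 1)` and `aJones α (i+1) = α (e^{aJones α i} - 1)`. -/
noncomputable def aJones (α : ℝ) : ℕ → ℝ
  | 0 => -(α - 1)
  | (i + 1) => α * (Real.exp (aJones α i) - 1)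


/-!
Along a slowly oscillating solution `x' t = α (1 - e^{x (t - 1)})` has the sign of `-x (t - 1)`,
so `x` rises on `[0, 1]`, falls on `[1, q + 1]` and rises again on `[q + 1, q + q̄]`. Every bound
comes from the mean value theorem on a window where the delayed value `x (t - 1)` is trapped between
known values, together with `1 + y < e^y`. In particular `x t > α t` on `(-1, 0)` gives
`x 1 < α - 1 + e^{-α}`, which strict convexity of `exp` turns into the lower bound on `q`; when
`q̄ ≥ 3`, `c = x (-1)` satisfies `c ≤ α (e^c - 1)` and hence lies below every Jones constant, which
bounds `q̄`. For `α ≥ 2`, `q ≥ 2` would give `α ∫₀¹ x < x 1`; but `x` is concave wherever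
`x (t - 1)` increases, and a minorant of `x` that is linear on `[0, c]` and a chord on `[c, 1]`
gives the reverse inequality.
-/

theorem aJones_neg {α : ℝ} (hα : 1 < α) (i : ℕ) : aJones α i < 0 := by
  induction i with
  | zero => simp only [aJones]; linarith
  | succ i ih =>
    have := exp_lt_one_iff.2 ih
    simp only [aJones]; nlinarith

theorem le_aJones {α c : ℝ} (hα : 0 ≤ α) (hc : c < 0) (hfix : c ≤ α * (exp c - 1)) (i : ℕ) :
    c ≤ aJones α i := by
  induction i with
  | zero =>
    -- `e^c (1 - c) ≤ 1` turns `α (1 - e^c) ≤ -c` into `α ≤ 1 - c`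
    have hexp : exp c * (1 - c) ≤ 1 := by
      have := add_one_le_exp (-c)
      rw [exp_neg] at this
      have := exp_pos c
      nlinarith [mul_inv_cancel₀ this.ne']
    simp only [aJones]
    nlinarith
  | succ i ih =>
    have := exp_le_exp.2 ih
    simp only [aJones]; nlinarith

theorem ConcaveOn.trapezoid_le_integral {f : ℝ → ℝ} {a b : ℝ} (hab : a ≤ b)
    (hf : ContinuousOn f (Icc a b)) (hconc : ConcaveOn ℝ (Icc a b) f) :
    (b - a) * ((f a + f b) / 2) ≤ ∫ s in a..b, f s := by
  have hmaps : MapsTo (fun t => (b - a) * t + a) (Icc 0 1) (Icc a b) := fun t ht =>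
    ⟨by nlinarith [ht.1], by nlinarith [ht.2]⟩
  have hchord : ∀ t ∈ Icc (0 : ℝ) 1, (1 - t) * f a + t * f b ≤ f ((b - a) * t + a) := by
    intro t ht
    have := hconc.2 (left_mem_Icc.2 hab) (right_mem_Icc.2 hab) (by linarith [ht.2] : 0 ≤ 1 - t) ht.1
      (by ring : 1 - t + t = 1)
    simp only [smul_eq_mul] at this
    rwa [show (b - a) * t + a = (1 - t) * a + t * b by ring]
  have hmono := intervalIntegral.integral_mono_on (μ := MeasureTheory.volume) zero_le_one
    ((by fun_prop : Continuous fun t : ℝ => (1 - t) * f a + t * f b).intervalIntegrable _ _)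
    ((hf.comp (by fun_prop) hmaps).intervalIntegrable_of_Icc zero_le_one) hchord
  have hsub := intervalIntegral.smul_integral_comp_mul_add (a := 0) (b := 1) f (b - a) a
  simp only [mul_zero, zero_add, mul_one, sub_add_cancel, smul_eq_mul] at hsub
  rw [← hsub]
  have hlin : ∫ t in (0 : ℝ)..1, (1 - t) * f a + t * f b = (f a + f b) / 2 := by
    rw [intervalIntegral.integral_add
      ((by fun_prop : Continuous fun t : ℝ => (1 - t) * f a).intervalIntegrable _ _)
      ((by fun_prop : Continuous fun t : ℝ => t * f b).intervalIntegrable _ _)]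
    rw [intervalIntegral.integral_mul_const, intervalIntegral.integral_mul_const,
      intervalIntegral.integral_comp_sub_left (fun t => t), integral_id]
    norm_num
    ring
  rw [hlin] at hmono
  exact mul_le_mul_of_nonneg_left hmono (by linarith)

theorem le_integral_of_mul_le_of_concaveOn {f : ℝ → ℝ} {c σ : ℝ} (hc0 : 0 ≤ c) (hc1 : c ≤ 1)
    (hf : ContinuousOn f (Icc 0 1)) (hlin : ∀ s ∈ Icc 0 c, σ * s ≤ f s)
    (hconc : ConcaveOn ℝ (Icc c 1) f) :
    σ * c ^ 2 / 2 + (1 - c) * ((σ * c + f 1) / 2) ≤ ∫ s in (0 : ℝ)..1, f s := by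
  have hf₁ : ContinuousOn f (Icc 0 c) := hf.mono (Icc_subset_Icc le_rfl hc1)
  have hf₂ : ContinuousOn f (Icc c 1) := hf.mono (Icc_subset_Icc hc0 le_rfl)
  have hleft : σ * c ^ 2 / 2 ≤ ∫ s in (0 : ℝ)..c, f s := by
    have := intervalIntegral.integral_mono_on (μ := MeasureTheory.volume) hc0
      ((by fun_prop : Continuous fun s : ℝ => σ * s).intervalIntegrable _ _)
      (hf₁.intervalIntegrable_of_Icc hc0) hlin
    rw [intervalIntegral.integral_const_mul, integral_id] at this
    linarith
  have hright := hconc.trapezoid_le_integral hc1 hf₂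
  have hσc := hlin c (right_mem_Icc.2 hc0)
  rw [← intervalIntegral.integral_add_adjacent_intervals (hf₁.intervalIntegrable_of_Icc hc0)
    (hf₂.intervalIntegrable_of_Icc hc1)]
  nlinarith

namespace WrightSol

variable {α : ℝ} {x : ℝ → ℝ}

theorem differentiable (hW : WrightSol α x) : Differentiable ℝ x :=
  fun t => (hW t).differentiableAt

theorem continuous (hW : WrightSol α x) : Continuous x :=
  hW.differentiable.continuous

theorem deriv_eq (hW : WrightSol α x) (t : ℝ) : deriv x t = α * (1 - exp (x (t - 1))) := by
  rw [(hW t).deriv]; ring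

theorem continuous_mul_one_sub_exp (hW : WrightSol α x) :
    Continuous fun s => α * (1 - exp (x s)) := by
  have := hW.continuous; fun_prop

theorem sub_eq_integral (hW : WrightSol α x) (a b : ℝ) :
    x b - x a = ∫ s in (a - 1)..(b - 1), α * (1 - exp (x s)) := by
  have hcont : Continuous fun t => -α * (exp (x (t - 1)) - 1) := by
    have := hW.continuous; fun_prop
  rw [← intervalIntegral.integral_comp_sub_right (fun s => α * (1 - exp (x s))),
    ← intervalIntegral.integral_eq_sub_of_hasDerivAt (fun t _ => hW t)
      (hcont.intervalIntegrable a b)]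
  congr 1; ext t; ring

theorem sub_le_integral (hW : WrightSol α x) {a b : ℝ} {g : ℝ → ℝ} (hg : Continuous g)
    (hab : a ≤ b) (hle : ∀ s ∈ Icc (a - 1) (b - 1), α * (1 - exp (x s)) ≤ g s) :
    x b - x a ≤ ∫ s in (a - 1)..(b - 1), g s := by
  rw [hW.sub_eq_integral]
  exact intervalIntegral.integral_mono_on (by linarith)
    (hW.continuous_mul_one_sub_exp.intervalIntegrable _ _) (hg.intervalIntegrable _ _) hle

theorem sub_lt_integral (hW : WrightSol α x) {a b : ℝ} {g : ℝ → ℝ} (hg : Continuous g)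
    (hab : a < b) (hle : ∀ s ∈ Ioc (a - 1) (b - 1), α * (1 - exp (x s)) ≤ g s)
    (hlt : ∃ s ∈ Icc (a - 1) (b - 1), α * (1 - exp (x s)) < g s) :
    x b - x a < ∫ s in (a - 1)..(b - 1), g s := by
  rw [hW.sub_eq_integral]
  exact intervalIntegral.integral_lt_integral_of_continuousOn_of_le_of_exists_lt (by linarith)
    hW.continuous_mul_one_sub_exp.continuousOn hg.continuousOn hle hlt

theorem sub_le_of_forall_le (hW : WrightSol α x) (hα : 0 ≤ α) {a b m : ℝ} (hab : a ≤ b)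
    (hm : ∀ s ∈ Ioo (a - 1) (b - 1), m ≤ x s) :
    x b - x a ≤ α * (1 - exp m) * (b - a) := by
  refine (convex_Icc a b).image_sub_le_mul_sub_of_deriv_le hW.continuous.continuousOn
    hW.differentiable.differentiableOn (fun t ht => ?_) a (left_mem_Icc.2 hab) b
    (right_mem_Icc.2 hab) hab
  rw [interior_Icc] at ht
  rw [hW.deriv_eq]
  have := exp_le_exp.2 (hm (t - 1) ⟨by linarith [ht.1], by linarith [ht.2]⟩)
  nlinarith

theorem le_sub_of_forall_le (hW : WrightSol α x) (hα : 0 ≤ α) {a b M : ℝ} (hab : a ≤ b)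
    (hM : ∀ s ∈ Ioo (a - 1) (b - 1), x s ≤ M) :
    α * (1 - exp M) * (b - a) ≤ x b - x a := by
  refine (convex_Icc a b).mul_sub_le_image_sub_of_le_deriv hW.continuous.continuousOn
    hW.differentiable.differentiableOn (fun t ht => ?_) a (left_mem_Icc.2 hab) b
    (right_mem_Icc.2 hab) hab
  rw [interior_Icc] at ht
  rw [hW.deriv_eq]
  have := exp_le_exp.2 (hM (t - 1) ⟨by linarith [ht.1], by linarith [ht.2]⟩)
  nlinarith

theorem monotoneOn_of_forall_nonpos (hW : WrightSol α x) (hα : 0 ≤ α) {a b : ℝ}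
    (h : ∀ s ∈ Ioo (a - 1) (b - 1), x s ≤ 0) : MonotoneOn x (Icc a b) := by
  intro s hs t ht hst
  have := hW.le_sub_of_forall_le hα hst fun r hr =>
    h r ⟨by linarith [hs.1, hr.1], by linarith [ht.2, hr.2]⟩
  simpa using this

theorem antitoneOn_of_forall_nonneg (hW : WrightSol α x) (hα : 0 ≤ α) {a b : ℝ}
    (h : ∀ s ∈ Ioo (a - 1) (b - 1), 0 ≤ x s) : AntitoneOn x (Icc a b) := by
  intro s hs t ht hst
  have := hW.sub_le_of_forall_le hα hst fun r hr =>
    h r ⟨by linarith [hs.1, hr.1], by linarith [ht.2, hr.2]⟩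
  simpa using this

theorem concaveOn_of_monotoneOn (hW : WrightSol α x) (hα : 0 ≤ α) {a b : ℝ}
    (h : MonotoneOn x (Icc (a - 1) (b - 1))) : ConcaveOn ℝ (Icc a b) x := by
  refine AntitoneOn.concaveOn_of_deriv (convex_Icc a b) hW.continuous.continuousOn
    hW.differentiable.differentiableOn ?_
  rw [interior_Icc]
  intro s hs t ht hst
  rw [hW.deriv_eq, hW.deriv_eq]
  have := exp_le_exp.2 (h ⟨by linarith [hs.1], by linarith [hs.2]⟩
    ⟨by linarith [ht.1], by linarith [ht.2]⟩ (by linarith : s - 1 ≤ t - 1))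
  nlinarith

end WrightSol

theorem Function.Periodic.monotoneOn_Icc_sub {β : Type*} [Preorder β] {f : ℝ → β} {L a b : ℝ}
    (hf : Function.Periodic f L) (h : MonotoneOn f (Icc a b)) :
    MonotoneOn f (Icc (a - L) (b - L)) := by
  intro s hs t ht hst
  have := h ⟨by linarith [hs.1], by linarith [hs.2]⟩ ⟨by linarith [ht.1], by linarith [ht.2]⟩
    (by linarith : s + L ≤ t + L)
  rwa [hf s, hf t] at this

theorem Function.Periodic.antitoneOn_Icc_sub {β : Type*} [Preorder β] {f : ℝ → β} {L a b : ℝ}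
    (hf : Function.Periodic f L) (h : AntitoneOn f (Icc a b)) :
    AntitoneOn f (Icc (a - L) (b - L)) :=
  hf.monotoneOn_Icc_sub (β := βᵒᵈ) h

structure SlowOscillation (α q qbar : ℝ) (x : ℝ → ℝ) : Prop where
  wright : WrightSol α x
  one_lt_q : 1 < q
  one_lt_qbar : 1 < qbar
  apply_zero : x 0 = 0
  pos : ∀ t ∈ Ioo 0 q, 0 < x t
  neg : ∀ t ∈ Ioo q (q + qbar), x t < 0
  periodic : Function.Periodic x (q + qbar)

theorem SOPSX.slowOscillation {α q qbar : ℝ} {x : ℝ → ℝ} (hx : SOPSX α q qbar x) :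
    SlowOscillation α q qbar x :=
  ⟨hx.2.1, hx.2.2.1, hx.2.2.2.1, hx.1.2.1, hx.2.2.2.2.1, hx.2.2.2.2.2.1, hx.2.2.2.2.2.2.1⟩

namespace SlowOscillation

variable {α q qbar : ℝ} {x : ℝ → ℝ}

theorem neg_of_mem_Ioo (h : SlowOscillation α q qbar x) {t : ℝ} (ht : t ∈ Ioo (-qbar) 0) :
    x t < 0 := by
  rw [← h.periodic t]
  exact h.neg _ ⟨by linarith [ht.1], by linarith [ht.2]⟩

theorem apply_q (h : SlowOscillation α q qbar x) : x q = 0 := by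
  have hq : q ≠ q + qbar := by linarith [h.one_lt_qbar]
  have hle : x q ≤ 0 := by
    refine le_on_closure (fun t ht => (h.neg t ht).le) h.wright.continuous.continuousOn
      continuousOn_const ?_
    rw [closure_Ioo hq]
    exact left_mem_Icc.2 (by linarith [h.one_lt_qbar])
  have hge : 0 ≤ x q := by
    refine le_on_closure (fun t ht => (h.pos t ht).le) continuousOn_const
      h.wright.continuous.continuousOn ?_
    rw [closure_Ioo (by linarith [h.one_lt_q])]
    exact right_mem_Icc.2 (by linarith [h.one_lt_q])
  exact le_antisymm hle hge

theorem apply_neg_one_neg (h : SlowOscillation α q qbar x) : x (-1) < 0 :=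
  h.neg_of_mem_Ioo ⟨by linarith [h.one_lt_qbar], by norm_num⟩

theorem apply_one_pos (h : SlowOscillation α q qbar x) : 0 < x 1 :=
  h.pos 1 ⟨one_pos, h.one_lt_q⟩

theorem monotoneOn_Icc_zero_one (h : SlowOscillation α q qbar x) (hα : 0 ≤ α) :
    MonotoneOn x (Icc 0 1) :=
  h.wright.monotoneOn_of_forall_nonpos hα fun s hs =>
    (h.neg_of_mem_Ioo ⟨by linarith [hs.1, h.one_lt_qbar], by linarith [hs.2]⟩).le

theorem antitoneOn_Icc_one (h : SlowOscillation α q qbar x) (hα : 0 ≤ α) :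
    AntitoneOn x (Icc 1 (q + 1)) :=
  h.wright.antitoneOn_of_forall_nonneg hα fun s hs =>
    (h.pos s ⟨by linarith [hs.1], by linarith [hs.2]⟩).le

theorem monotoneOn_Icc_q_add_one (h : SlowOscillation α q qbar x) (hα : 0 ≤ α) :
    MonotoneOn x (Icc (q + 1) (q + qbar)) :=
  h.wright.monotoneOn_of_forall_nonpos hα fun s hs =>
    (h.neg s ⟨by linarith [hs.1], by linarith [hs.2, h.one_lt_qbar]⟩).le

theorem monotoneOn_Icc_one_sub_qbar (h : SlowOscillation α q qbar x) (hα : 0 ≤ α) :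
    MonotoneOn x (Icc (1 - qbar) 0) := by
  have := h.periodic.monotoneOn_Icc_sub (h.monotoneOn_Icc_q_add_one hα)
  rwa [show q + 1 - (q + qbar) = 1 - qbar by ring, sub_self] at this

theorem antitoneOn_Icc_one_sub_period (h : SlowOscillation α q qbar x) (hα : 0 ≤ α) :
    AntitoneOn x (Icc (1 - (q + qbar)) (1 - qbar)) := by
  have := h.periodic.antitoneOn_Icc_sub (h.antitoneOn_Icc_one hα)
  rwa [show q + 1 - (q + qbar) = 1 - qbar by ring] at this

theorem le_apply_one (h : SlowOscillation α q qbar x) (hα : 0 ≤ α) {s : ℝ} (hs : s ∈ Icc 0 q) :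
    x s ≤ x 1 := by
  have hq := h.one_lt_q
  rcases le_total s 1 with hs1 | hs1
  · exact h.monotoneOn_Icc_zero_one hα ⟨hs.1, hs1⟩ (right_mem_Icc.2 zero_le_one) hs1
  · exact h.antitoneOn_Icc_one hα (left_mem_Icc.2 (by linarith)) ⟨hs1, by linarith [hs.2]⟩ hs1

theorem apply_q_add_one_le (h : SlowOscillation α q qbar x) (hα : 0 ≤ α) {s : ℝ}
    (hs : s ∈ Icc q (q + qbar)) : x (q + 1) ≤ x s := by
  have hqbar := h.one_lt_qbar
  rcases le_total s (q + 1) with hs1 | hs1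
  · exact h.antitoneOn_Icc_one hα ⟨by linarith [hs.1, h.one_lt_q], hs1⟩
      (right_mem_Icc.2 (by linarith [h.one_lt_q])) hs1
  · exact h.monotoneOn_Icc_q_add_one hα (left_mem_Icc.2 (by linarith)) ⟨hs1, hs.2⟩ hs1

theorem one_add_inv_lt_qbar (h : SlowOscillation α q qbar x) (hα : 0 < α) :
    1 + 1 / α < qbar := by
  have hqbar := h.one_lt_qbar
  have hm : x (q + 1) < 0 := h.neg _ ⟨by linarith, by linarith⟩
  have hrise := h.wright.sub_le_of_forall_le hα.le (by linarith : q + 1 ≤ q + qbar) fun s hs =>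
    h.apply_q_add_one_le hα.le ⟨by linarith [hs.1], by linarith [hs.2]⟩
  have hexp := add_one_lt_exp hm.ne
  rw [h.periodic.eq, h.apply_zero] at hrise
  -- `-m ≤ α (1 - e^m) (qbar - 1) < α (-m) (qbar - 1)` for the minimum `m = x (q + 1)`
  have : 1 < α * (qbar - 1) := by
    nlinarith [mul_lt_mul_of_pos_left (by linarith : 1 - exp (x (q + 1)) < -x (q + 1))
      (by nlinarith : 0 < α * (qbar - 1))]
  have : 1 / α < qbar - 1 := by rw [div_lt_iff₀ hα]; linarith
  linarith

theorem sub_mul_lt_one (h : SlowOscillation α q qbar x) (hα : 0 < α) {a : ℝ} (ha : 2 ≤ a)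
    (hqa : q - 1 ≤ a) (haq : a < q) : (q - a) * α < 1 := by
  have hpos : 0 < x (q - 1) := h.pos _ ⟨by linarith, by linarith⟩
  have hanti := h.antitoneOn_Icc_one hα.le
  have hfall := h.wright.sub_le_of_forall_le hα.le haq.le fun s hs =>
    hanti ⟨by linarith [hs.1], by linarith [hs.2]⟩ ⟨by linarith, by linarith⟩ hs.2.le
  have hmin : x a ≤ x (q - 1) := hanti ⟨by linarith, by linarith⟩ ⟨by linarith, by linarith⟩ hqa
  have hexp := add_one_lt_exp hpos.ne'
  rw [h.apply_q] at hfall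
  have hxa : 0 < x a := h.pos a ⟨by linarith, haq⟩
  -- `x a ≥ α (e^{x (q-1)} - 1) (q - a) > α x (q-1) (q - a) ≥ α x a (q - a)`
  have hqa' : 0 < (q - a) * α := mul_pos (by linarith) hα
  nlinarith [mul_lt_mul_of_pos_left (by linarith : x (q - 1) < exp (x (q - 1)) - 1) hqa']

theorem q_lt_three (h : SlowOscillation α q qbar x) (hα : 1 < α) : q < 3 := by
  by_contra! hq
  have := h.sub_mul_lt_one (by linarith) (by linarith : 2 ≤ q - 1) le_rfl (by linarith)
  linarith

theorem q_lt (h : SlowOscillation α q qbar x) (hα : 1 < α) : q < 2 + 1 / α := by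
  have hα0 : 0 < α := by linarith
  rcases le_or_gt q 2 with hq | hq
  · have : 0 < 1 / α := by positivity
    linarith
  have := h.sub_mul_lt_one hα0 le_rfl (by linarith [h.q_lt_three hα]) hq
  rw [← sub_lt_iff_lt_add', lt_div_iff₀ hα0]
  exact this

theorem mul_lt_apply (h : SlowOscillation α q qbar x) (hα : 0 < α) {u : ℝ} (hu : u ∈ Ioo (-1) 0) :
    α * u < x u := by
  have := (convex_Icc u 0).image_sub_lt_mul_sub_of_deriv_lt
    h.wright.continuous.continuousOn h.wright.differentiable.differentiableOn
    (fun t _ => by rw [h.wright.deriv_eq]; nlinarith [exp_pos (x (t - 1))])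
    u (left_mem_Icc.2 hu.2.le) 0 (right_mem_Icc.2 hu.2.le) hu.2
  rw [h.apply_zero] at this
  linarith

theorem apply_one_lt (h : SlowOscillation α q qbar x) (hα : 0 < α) :
    x 1 < α - 1 + exp (-α) := by
  have hle : ∀ s ∈ Ioc (0 - 1 : ℝ) (1 - 1), α * (1 - exp (x s)) ≤ α * (1 - exp (α * s)) := by
    intro s hs
    norm_num at hs
    rcases hs.2.eq_or_lt with rfl | hs0
    · simp [h.apply_zero]
    · have := exp_le_exp.2 (h.mul_lt_apply hα ⟨hs.1, hs0⟩).le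
      nlinarith
  have hlt : α * (1 - exp (x (-1 / 2))) < α * (1 - exp (α * (-1 / 2))) := by
    have := exp_lt_exp.2 (h.mul_lt_apply hα (by norm_num : (-1 / 2 : ℝ) ∈ Ioo (-1) 0))
    nlinarith
  have hG : ∀ u, HasDerivAt (fun v => α * v - exp (α * v)) (α * (1 - exp (α * u))) u := by
    intro u
    have hlin : HasDerivAt (fun v => α * v) α u := by
      simpa using (hasDerivAt_id u).const_mul α
    exact (hlin.sub hlin.exp).congr_deriv (by ring)
  have hrise := h.wright.sub_lt_integral (by fun_prop) one_pos hle
    ⟨-1 / 2, by norm_num, hlt⟩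
  rw [intervalIntegral.integral_eq_sub_of_hasDerivAt (fun u _ => hG u)
    ((by fun_prop : Continuous fun u => α * (1 - exp (α * u))).intervalIntegrable _ _),
    h.apply_zero] at hrise
  norm_num at hrise
  linarith

theorem q_gt (h : SlowOscillation α q qbar x) (hα : 0 < α) :
    1 + 1 / α * ((α + exp (-α) - 1) / (exp (α + exp (-α) - 1) - 1)) < q := by
  set M := x 1
  set N := α + exp (-α) - 1
  have hM : 0 < M := h.apply_one_pos
  have hMN : M < N := by have := h.apply_one_lt hα; simp only [N]; linarith
  have hfall := h.wright.le_sub_of_forall_le hα.le h.one_lt_q.le fun s hs =>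
    h.le_apply_one hα.le ⟨by linarith [hs.1], by linarith [hs.2]⟩
  rw [h.apply_q] at hfall
  -- `(e^y - 1) / y` increases on `(0, ∞)` since `exp` is strictly convex
  have hslope := strictConvexOn_exp.secant_strict_mono (mem_univ 0) (mem_univ M) (mem_univ N)
    hM.ne' (by linarith) hMN
  simp only [exp_zero, sub_zero] at hslope
  have heM : 0 < exp M - 1 := by linarith [add_one_lt_exp hM.ne']
  have heN : 0 < exp N - 1 := by linarith [add_one_lt_exp (by linarith : N ≠ 0)]
  rw [div_lt_div_iff₀ hM (by linarith)] at hslope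
  have : N / (exp N - 1) < (q - 1) * α := by rw [div_lt_iff₀ heN]; nlinarith
  calc 1 + 1 / α * (N / (exp N - 1)) < 1 + 1 / α * ((q - 1) * α) := by gcongr
    _ = q := by field_simp; ring

theorem mul_one_sub_exp_lt_apply_q_add_one (h : SlowOscillation α q qbar x) (hα : 0 < α) :
    α * (1 - exp α) < x (q + 1) := by
  have hfall := h.wright.le_sub_of_forall_le hα.le (by linarith : q ≤ q + 1) fun s hs =>
    h.le_apply_one hα.le ⟨by linarith [hs.1, h.one_lt_q], by linarith [hs.2]⟩
  rw [h.apply_q] at hfall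
  have hM : x 1 < α := by linarith [h.apply_one_lt hα, exp_lt_one_iff.2 (neg_lt_zero.2 hα)]
  nlinarith [exp_lt_exp.2 hM]

theorem apply_neg_one_le_mul_exp_sub_one (h : SlowOscillation α q qbar x) (hα : 0 ≤ α)
    (hqbar : 3 ≤ qbar) : x (-1) ≤ α * (exp (x (-1)) - 1) := by
  have hmono := h.monotoneOn_Icc_one_sub_qbar hα
  have hrise := h.wright.le_sub_of_forall_le (M := x (-1)) hα (by norm_num : (-1 : ℝ) ≤ 0)
    fun s hs => hmono ⟨by linarith [hs.1], by linarith [hs.2]⟩ ⟨by linarith, by norm_num⟩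
      (by linarith [hs.2])
  rw [h.apply_zero] at hrise
  linarith

theorem sub_two_mul_lt (h : SlowOscillation α q qbar x) (hα : 0 < α) (hqbar : 2 ≤ qbar) :
    (qbar - 2) * (1 - exp (x (-1))) < exp α - 1 := by
  have hmono := h.monotoneOn_Icc_one_sub_qbar hα.le
  have hrise := h.wright.le_sub_of_forall_le (M := x (-1)) hα.le (by linarith : 2 - qbar ≤ 0)
    fun s hs => hmono ⟨by linarith [hs.1], by linarith [hs.2]⟩ ⟨by linarith, by norm_num⟩
      (by linarith [hs.2])
  have hmin : x (1 - qbar) ≤ x (2 - qbar) :=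
    hmono (left_mem_Icc.2 (by linarith)) ⟨by linarith, by linarith⟩ (by linarith)
  have hper : x (1 - qbar) = x (q + 1) := by
    rw [← h.periodic (1 - qbar)]; ring_nf
  rw [h.apply_zero] at hrise
  rw [hper] at hmin
  have := h.mul_one_sub_exp_lt_apply_q_add_one hα
  nlinarith

theorem qbar_lt (h : SlowOscillation α q qbar x) (hα : 1 < α) (i : ℕ) :
    qbar < max 3 (2 + |(exp α - 1) / (exp (aJones α i) - 1)|) := by
  rcases lt_or_ge qbar 3 with hqbar | hqbar
  · exact lt_max_of_lt_left hqbar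
  have hα0 : 0 < α := by linarith
  have hc := le_aJones hα0.le h.apply_neg_one_neg
    (h.apply_neg_one_le_mul_exp_sub_one hα0.le hqbar) i
  have ha : exp (aJones α i) < 1 := exp_lt_one_iff.2 (aJones_neg hα i)
  have hbound := h.sub_two_mul_lt hα0 (by linarith)
  have habs : |(exp α - 1) / (exp (aJones α i) - 1)| = (exp α - 1) / (1 - exp (aJones α i)) := by
    rw [abs_div, abs_of_pos (by linarith [add_one_lt_exp hα0.ne']), abs_of_neg (by linarith),
      neg_sub]
  refine lt_max_of_lt_right ?_
  rw [habs, ← sub_lt_iff_lt_add', lt_div_iff₀ (by linarith)]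
  nlinarith [exp_le_exp.2 hc]

theorem mul_integral_lt_apply_one (h : SlowOscillation α q qbar x) (hα : 0 < α) (hq : 2 ≤ q) :
    α * ∫ s in (0 : ℝ)..1, x s < x 1 := by
  have hgap : ∀ s ∈ Ioc (0 : ℝ) 1, α * (1 - exp (x s)) < α * -x s := fun s hs => by
    have := add_one_lt_exp (h.pos s ⟨hs.1, by linarith [hs.2]⟩).ne'
    nlinarith
  have hx := h.wright.continuous
  have hrise := h.wright.sub_lt_integral (g := fun s => α * -x s) (by fun_prop)
    (by norm_num : (1 : ℝ) < 2) (fun s hs => (hgap s (by norm_num at hs; exact hs)).le)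
    ⟨1, by norm_num, hgap 1 (by norm_num)⟩
  have hx2 : 0 ≤ x 2 := by
    rcases hq.eq_or_lt with rfl | hq
    · exact h.apply_q.ge
    · exact (h.pos 2 ⟨two_pos, hq⟩).le
  norm_num [intervalIntegral.integral_neg] at hrise
  linarith

theorem mul_le_apply_of_mem_Icc_neg_one_zero (h : SlowOscillation α q qbar x) (hα : 0 ≤ α)
    (hq : 2 ≤ q) (hqbar : qbar ≤ 2) {u : ℝ} (hu : u ∈ Icc (-1) 0) :
    α * (1 - exp (x (-1))) * u ≤ x u := by
  have hanti := h.antitoneOn_Icc_one_sub_period hα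
  have hqbar' := h.one_lt_qbar
  have hfall := h.wright.sub_le_of_forall_le (m := x (-1)) hα hu.2 fun s hs =>
    hanti ⟨by linarith [hs.1, hu.1], by linarith [hs.2]⟩ ⟨by linarith, by linarith⟩
      (by linarith [hs.2])
  rw [h.apply_zero] at hfall
  linarith

theorem two_mul_apply_one_le (h : SlowOscillation α q qbar x) (hα : 0 ≤ α) (hq : 2 ≤ q)
    (hqbar : qbar ≤ 2) : 2 * x 1 ≤ α * (α * (1 - exp (x (-1)))) := by
  set σ := α * (1 - exp (x (-1)))
  have hrise := h.wright.sub_le_integral (g := fun s => -(α * σ * s)) (by fun_prop) zero_le_one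
    fun s hs => by
      norm_num at hs
      have := h.mul_le_apply_of_mem_Icc_neg_one_zero hα hq hqbar hs
      nlinarith [add_one_le_exp (x s)]
  rw [intervalIntegral.integral_neg, intervalIntegral.integral_const_mul, integral_id,
    h.apply_zero] at hrise
  norm_num at hrise
  linarith

theorem mul_le_apply_of_mem_Icc_zero (h : SlowOscillation α q qbar x) (hα : 0 ≤ α) {s : ℝ}
    (hs : s ∈ Icc 0 (2 - qbar)) : α * (1 - exp (x (-1))) * s ≤ x s := by
  have hanti := h.antitoneOn_Icc_one_sub_period hα
  have hq := h.one_lt_q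
  have hqbar := h.one_lt_qbar
  have hrise := h.wright.le_sub_of_forall_le (M := x (-1)) hα hs.1 fun t ht =>
    hanti ⟨by linarith, by linarith [hs.1, hs.2]⟩ ⟨by linarith [ht.1], by linarith [ht.2, hs.2]⟩
      (by linarith [ht.1])
  rw [h.apply_zero] at hrise
  linarith

theorem exists_concave_minorant (h : SlowOscillation α q qbar x) (hα : 0 < α) (hq : 2 ≤ q) :
    ∃ c σ : ℝ, 0 ≤ c ∧ c ≤ 1 ∧ 2 * x 1 ≤ α * σ ∧ (∀ s ∈ Icc 0 c, σ * s ≤ x s) ∧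
      ConcaveOn ℝ (Icc c 1) x := by
  have hconc : ∀ c, 1 - qbar ≤ c - 1 → ConcaveOn ℝ (Icc c 1) x := fun c hc =>
    h.wright.concaveOn_of_monotoneOn hα.le
      ((h.monotoneOn_Icc_one_sub_qbar hα.le).mono (Icc_subset_Icc hc (by norm_num)))
  rcases le_total 2 qbar with hqbar | hqbar
  · refine ⟨0, 2 * x 1 / α, le_rfl, zero_le_one, by field_simp; rfl, fun s hs => ?_,
      hconc 0 (by linarith)⟩
    rw [le_antisymm hs.2 hs.1, h.apply_zero, mul_zero]
  · exact ⟨2 - qbar, α * (1 - exp (x (-1))), by linarith, by linarith [h.one_lt_qbar],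
      h.two_mul_apply_one_le hα.le hq hqbar, fun s hs => h.mul_le_apply_of_mem_Icc_zero hα.le hs,
      hconc _ (by linarith)⟩

theorem q_lt_two (h : SlowOscillation α q qbar x) (hα : 2 ≤ α) : q < 2 := by
  by_contra! hq
  have hα0 : 0 < α := by linarith
  obtain ⟨c, σ, hc0, hc1, hσ, hlin, hconc⟩ := h.exists_concave_minorant hα0 hq
  have hint := le_integral_of_mul_le_of_concaveOn hc0 hc1 h.wright.continuous.continuousOn
    hlin hconc
  have hlt := h.mul_integral_lt_apply_one hα0 hq
  have hM := h.apply_one_pos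
  -- `α σ ≥ 2 x 1` and `α ≥ 2` make the minorant's integral at least `x 1 / α`
  nlinarith [mul_nonneg (by linarith : 0 ≤ α * σ - 2 * x 1) (sq_nonneg c),
    mul_nonneg (by linarith : 0 ≤ α * σ - 2 * x 1) (mul_nonneg hc0 (by linarith : 0 ≤ 1 - c)),
    mul_nonneg (by linarith : 0 ≤ α - 2) (mul_nonneg hM.le (by linarith : 0 ≤ 1 - c))]

end SlowOscillation

theorem q_qbar_bounds (α q qbar : ℝ) (x : ℝ → ℝ) (hα : Real.pi / 2 ≤ α)
    (hx : SOPSX α q qbar x) :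
    (1 + (1 / α) * ((α + Real.exp (-α) - 1) / (Real.exp (α + Real.exp (-α) - 1) - 1)) < q ∧
      q < 2 + 1 / α) ∧
    (1 + 1 / α < qbar ∧
      ∀ i : ℕ, qbar < max 3 (2 + |(Real.exp α - 1) / (Real.exp (aJones α i) - 1)|)) ∧
    (2 ≤ α → q < 2) := by
  have h := hx.slowOscillation
  have hα1 : 1 < α := by linarith [pi_gt_three]
  have hα0 : 0 < α := by linarith
  exact ⟨⟨h.q_gt hα0, h.q_lt hα1⟩, ⟨h.one_add_inv_lt_qbar hα0, h.qbar_lt hα1⟩, h.q_lt_two⟩
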